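/- Let G be a finite simple graph on vertex set [n] that is perfect, in the sense that its stable set polytope satisfies P_G = {x ∈ ℝⁿ : x ≥ 0 and Σ_{i∈C} x_i ≤ 1 for every clique C of G}. Then the polar of the Hansen polytope H(G) = conv((2·P_G × {1}) ∪ ((−2·P_G) × {−1})) ⊆ ℝⁿ × ℝ satisfies H(G)° = conv(((−P_{Ḡ}) × {1}) ∪ (P_{Ḡ} × {−1})), where Ḡ is the complement graph of G; equivalently, H(G)° is the image of H(Ḡ) under the linear automorphism (x,t) ↦ (−x/2, t) of ℝⁿ × ℝ, so H(G)° is linearly isomorphic to H(Ḡ). -/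

import Mathlib

open Set Pointwise

/-- The stable set polytope of a graph on vertex set `Fin n`: the convex hull of the
indicator vectors of stable (independent) sets. -/
def stablePoly {n : ℕ} (G : SimpleGraph (Fin n)) : Set (Fin n → ℝ) :=
  convexHull ℝ
    {x | ∃ S : Finset (Fin n), (∀ a ∈ S, ∀ b ∈ S, ¬ G.Adj a b) ∧
      x = fun i => if i ∈ S then (1 : ℝ) else 0}

/-- The Hansen polytope `H(G) = conv((2·P_G × {1}) ∪ ((−2·P_G) × {−1}))`. -/
def hansenPoly {n : ℕ} (G : SimpleGraph (Fin n)) : Set ((Fin n → ℝ) × ℝ) :=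
  convexHull ℝ
    (((fun x => (x, (1 : ℝ))) '' ((2 : ℝ) • stablePoly G)) ∪
     ((fun x => (x, (-1 : ℝ))) '' ((-2 : ℝ) • stablePoly G)))

/-- The polar of a subset of `ℝⁿ × ℝ` with respect to the standard inner product. -/
def polarNR {n : ℕ} (S : Set ((Fin n → ℝ) × ℝ)) : Set ((Fin n → ℝ) × ℝ) :=
  {y | ∀ x ∈ S, (∑ i, y.1 i * x.1 i) + y.2 * x.2 ≤ 1}

/-!
Dualizing the generators of `H(G)`, a point `(y, t)` lies in `H(G)°` iff `|2 y(S) + t| ≤ 1` for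
every stable set `S` of `G`, i.e. for every clique of `Ḡ`. For any graph `H`, the points obeying
these inequalities over the cliques of `H` form exactly the convex hull of
`(-QSTAB(H) × {1}) ∪ (QSTAB(H) × {-1})`, where `QSTAB(H)` is the clique-constrained polytope;
this is seen by splitting `y` into positive and negative parts. Finally, perfection of `G` gives
`P_Ḡ = QSTAB(Ḡ)` by a separation argument from Fulkerson's antiblocking theory, and the linear
map `(x, t) ↦ (-x/2, t)` carries the generators of `H(Ḡ)` onto those of this hull.
-/

open Matrix

section

variable {n : ℕ}

def cliqueConstrainedPoly (G : SimpleGraph (Fin n)) : Set (Fin n → ℝ) :=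
  {x | (∀ i, 0 ≤ x i) ∧ ∀ C : Finset (Fin n), G.IsClique (C : Set (Fin n)) → ∑ i ∈ C, x i ≤ 1}

def twoLevel (A B : Set (Fin n → ℝ)) : Set ((Fin n → ℝ) × ℝ) :=
  ((fun x => (x, (1 : ℝ))) '' A) ∪ ((fun x => (x, (-1 : ℝ))) '' B)

def cliqueSlab (G : SimpleGraph (Fin n)) : Set ((Fin n → ℝ) × ℝ) :=
  {p | ∀ C : Finset (Fin n), G.IsClique (C : Set (Fin n)) → |2 * ∑ i ∈ C, p.1 i + p.2| ≤ 1}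

lemma isIndepSet_coe_iff_forall_not_adj {G : SimpleGraph (Fin n)} {S : Finset (Fin n)} :
    G.IsIndepSet (S : Set (Fin n)) ↔ ∀ a ∈ S, ∀ b ∈ S, ¬ G.Adj a b :=
  ⟨fun hS _ ha _ hb hab => hS ha hb (G.ne_of_adj hab) hab,
    fun hS _ ha _ hb _ => hS _ ha _ hb⟩

lemma dotProduct_indicator (v : Fin n → ℝ) (S : Finset (Fin n)) :
    v ⬝ᵥ (fun i => if i ∈ S then (1 : ℝ) else 0) = ∑ i ∈ S, v i := by
  simp [dotProduct, Finset.sum_ite_mem]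

lemma indicator_mem_stablePoly {G : SimpleGraph (Fin n)} {S : Finset (Fin n)}
    (hS : G.IsIndepSet (S : Set (Fin n))) :
    (fun i => if i ∈ S then (1 : ℝ) else 0) ∈ stablePoly G :=
  subset_convexHull ℝ _ ⟨S, isIndepSet_coe_iff_forall_not_adj.1 hS, rfl⟩

lemma dotProduct_le_of_mem_stablePoly {G : SimpleGraph (Fin n)} {v x : Fin n → ℝ} {c : ℝ}
    (h : ∀ S : Finset (Fin n), G.IsIndepSet (S : Set (Fin n)) → ∑ i ∈ S, v i ≤ c)
    (hx : x ∈ stablePoly G) : v ⬝ᵥ x ≤ c := by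
  refine convexHull_min (𝕜 := ℝ) ?_
    (convex_halfSpace_le (dotProductBilin ℝ ℝ v).isLinear c) hx
  rintro _ ⟨S, hS, rfl⟩
  simpa [dotProduct_indicator] using h S (isIndepSet_coe_iff_forall_not_adj.2 hS)

lemma isCompact_stablePoly (G : SimpleGraph (Fin n)) : IsCompact (stablePoly G) :=
  ((Set.finite_range fun S : Finset (Fin n) => fun i => if i ∈ S then (1 : ℝ) else 0).subset
    (by rintro _ ⟨S, -, rfl⟩; exact ⟨S, rfl⟩)).isCompact_convexHull (𝕜 := ℝ)

lemma convex_cliqueConstrainedPoly (G : SimpleGraph (Fin n)) :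
    Convex ℝ (cliqueConstrainedPoly G) := by
  rintro x ⟨hx0, hxC⟩ y ⟨hy0, hyC⟩ a b ha hb hab
  refine ⟨fun i => add_nonneg (mul_nonneg ha (hx0 i)) (mul_nonneg hb (hy0 i)), fun C hC => ?_⟩
  calc ∑ i ∈ C, (a • x + b • y) i = a * ∑ i ∈ C, x i + b * ∑ i ∈ C, y i := by
        simp [Finset.sum_add_distrib, Finset.mul_sum]
    _ ≤ a * 1 + b * 1 := by gcongr; exacts [hxC C hC, hyC C hC]
    _ = 1 := by rw [mul_one, mul_one, hab]

lemma stablePoly_subset_cliqueConstrainedPoly (G : SimpleGraph (Fin n)) :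
    stablePoly G ⊆ cliqueConstrainedPoly G := by
  refine convexHull_min ?_ (convex_cliqueConstrainedPoly G)
  rintro _ ⟨S, hS, rfl⟩
  refine ⟨fun i => by positivity, fun C hC => ?_⟩
  -- an independent set meets a clique in at most one vertex
  rw [Finset.sum_ite_mem, Finset.sum_const, nsmul_one, Nat.cast_le_one, Finset.card_le_one]
  intro a ha b hb
  by_contra hab
  exact hS a (Finset.mem_inter.1 ha).2 b (Finset.mem_inter.1 hb).2
    (hC (Finset.mem_inter.1 ha).1 (Finset.mem_inter.1 hb).1 hab)

lemma mem_smul_cliqueConstrainedPoly {G : SimpleGraph (Fin n)} {r : ℝ} {y : Fin n → ℝ}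
    (hr : 0 ≤ r) (hy0 : ∀ i, 0 ≤ y i)
    (hyC : ∀ C : Finset (Fin n), G.IsClique (C : Set (Fin n)) → ∑ i ∈ C, y i ≤ r) :
    y ∈ r • cliqueConstrainedPoly G := by
  rcases hr.eq_or_lt with rfl | hr
  · obtain rfl : y = 0 := funext fun i =>
      le_antisymm (by simpa using hyC {i} (by simp)) (hy0 i)
    exact Set.zero_mem_smul_set ⟨fun _ => le_rfl, fun C _ => by simp⟩
  · refine ⟨r⁻¹ • y, ⟨fun i => mul_nonneg (inv_nonneg.2 hr.le) (hy0 i), fun C hC => ?_⟩,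
      smul_inv_smul₀ hr.ne' y⟩
    simp only [Pi.smul_apply, smul_eq_mul, ← Finset.mul_sum]
    exact inv_mul_le_one_of_le₀ (hyC C hC) hr.le

lemma sum_posPart_eq_sum_filter {ι : Type*} (s : Finset ι) (f : ι → ℝ) :
    ∑ i ∈ s, (f i)⁺ = ∑ i ∈ s with 0 ≤ f i, f i := by
  rw [Finset.sum_filter]
  exact Finset.sum_congr rfl fun i _ => posPart_eq_ite

lemma sum_posPart_le_of_isClique {G : SimpleGraph (Fin n)} {y : Fin n → ℝ} {r : ℝ}
    (hy : ∀ C : Finset (Fin n), G.IsClique (C : Set (Fin n)) → ∑ i ∈ C, y i ≤ r)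
    {C : Finset (Fin n)} (hC : G.IsClique (C : Set (Fin n))) : ∑ i ∈ C, (y i)⁺ ≤ r := by
  rw [sum_posPart_eq_sum_filter]
  exact hy _ (hC.subset (Finset.coe_subset.2 (Finset.filter_subset _ _)))

/-- Separate a point `y` of `cliqueConstrainedPoly Gᶜ` from `stablePoly Gᶜ` by `c ⬝ᵥ · ≤ u`.
Then `c⁺ / u` satisfies the clique inequalities of `G`, so it lies in `stablePoly G` by
perfection, and hence `c ⬝ᵥ y ≤ c⁺ ⬝ᵥ y ≤ u`, a contradiction. -/
theorem stablePoly_compl_eq_of_perfect {G : SimpleGraph (Fin n)}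
    (hperf : stablePoly G = cliqueConstrainedPoly G) :
    stablePoly Gᶜ = cliqueConstrainedPoly Gᶜ := by
  refine (stablePoly_subset_cliqueConstrainedPoly Gᶜ).antisymm fun y hy => ?_
  by_contra hyQ
  obtain ⟨f, u, hfQ, hfy⟩ := geometric_hahn_banach_closed_point (convex_convexHull ℝ _)
    (isCompact_stablePoly Gᶜ).isClosed hyQ
  obtain ⟨c, hc⟩ : ∃ c : Fin n → ℝ, ∀ x, f x = c ⬝ᵥ x := ⟨_, fun x =>
    (LinearMap.congr_fun ((dotProductEquiv ℝ (Fin n)).apply_symm_apply f.toLinearMap) x).symm⟩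
  have hu : 0 < u := by
    simpa [hc] using hfQ 0 (indicator_mem_stablePoly (S := ∅) (by simp))
  have hcC : ∀ C : Finset (Fin n), G.IsClique (C : Set (Fin n)) → ∑ i ∈ C, c i ≤ u :=
    fun C hC => by
      simpa [hc, dotProduct_indicator] using
        (hfQ _ (indicator_mem_stablePoly (G.isIndepSet_compl.2 hC))).le
  obtain ⟨d, hd, hcd⟩ : c⁺ ∈ u • stablePoly G := by
    rw [hperf]
    exact mem_smul_cliqueConstrainedPoly hu.le (fun i => posPart_nonneg _)
      fun C hC => sum_posPart_le_of_isClique hcC hC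
  have hyd : d ⬝ᵥ y ≤ 1 := by
    rw [dotProduct_comm]
    exact dotProduct_le_of_mem_stablePoly (fun S hS => hy.2 S (G.isClique_compl.2 hS)) hd
  have hcy : c ⬝ᵥ y ≤ c⁺ ⬝ᵥ y :=
    dotProduct_le_dotProduct_of_nonneg_right (fun i => le_posPart (c i)) hy.1
  rw [← hcd, smul_dotProduct, smul_eq_mul] at hcy
  rw [hc] at hfy
  linarith [mul_le_of_le_one_right hu.le hyd]

lemma convex_cliqueSlab (G : SimpleGraph (Fin n)) : Convex ℝ (cliqueSlab G) := by
  intro p hp q hq a b ha hb hab C hC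
  have key : 2 * ∑ i ∈ C, (a • p + b • q).1 i + (a • p + b • q).2 =
      a * (2 * ∑ i ∈ C, p.1 i + p.2) + b * (2 * ∑ i ∈ C, q.1 i + q.2) := by
    simp only [Prod.fst_add, Prod.snd_add, Prod.smul_fst, Prod.smul_snd, Pi.add_apply,
      Pi.smul_apply, smul_eq_mul, Finset.sum_add_distrib, ← Finset.mul_sum]
    ring
  rw [key]
  calc _ ≤ |a * (2 * ∑ i ∈ C, p.1 i + p.2)| + |b * (2 * ∑ i ∈ C, q.1 i + q.2)| := abs_add_le _ _
    _ ≤ a * 1 + b * 1 := by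
      rw [abs_mul, abs_mul, abs_of_nonneg ha, abs_of_nonneg hb]
      gcongr
      exacts [hp C hC, hq C hC]
    _ = 1 := by rw [mul_one, mul_one, hab]

lemma convexHull_twoLevel_subset_cliqueSlab (G : SimpleGraph (Fin n)) :
    convexHull ℝ (twoLevel (-cliqueConstrainedPoly G) (cliqueConstrainedPoly G)) ⊆
      cliqueSlab G := by
  refine convexHull_min ?_ (convex_cliqueSlab G)
  rintro _ (⟨x, ⟨hx0, hxC⟩, rfl⟩ | ⟨x, ⟨hx0, hxC⟩, rfl⟩) C hC
  · have h0 : 0 ≤ ∑ i ∈ C, -x i := Finset.sum_nonneg fun i _ => hx0 i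
    have h1 := hxC C hC
    simp only [Pi.neg_apply, Finset.sum_neg_distrib] at h0 h1
    rw [abs_le]; constructor <;> linarith
  · have h0 : 0 ≤ ∑ i ∈ C, x i := Finset.sum_nonneg fun i _ => hx0 i
    have h1 := hxC C hC
    rw [abs_le]; constructor <;> linarith

/-- Writing `t = 2 l - 1`, the clique inequalities say `y⁻ ∈ l • cliqueConstrainedPoly G` and
`y⁺ ∈ (1 - l) • cliqueConstrainedPoly G`; then `(y, t) = l • (-q₁, 1) + (1 - l) • (q₂, -1)`. -/
lemma cliqueSlab_subset_convexHull_twoLevel (G : SimpleGraph (Fin n)) :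
    cliqueSlab G ⊆
      convexHull ℝ (twoLevel (-cliqueConstrainedPoly G) (cliqueConstrainedPoly G)) := by
  rintro ⟨y, t⟩ h
  obtain ⟨l, rfl⟩ : ∃ l, t = 2 * l - 1 := ⟨(1 + t) / 2, by ring⟩
  have hl : 0 ≤ l ∧ l ≤ 1 := by
    have := abs_le.1 (h ∅ (by simp))
    simp only [Finset.sum_empty, mul_zero, zero_add] at this
    constructor <;> linarith
  have hyC : ∀ C : Finset (Fin n), G.IsClique (C : Set (Fin n)) →
      ∑ i ∈ C, y i ≤ 1 - l ∧ ∑ i ∈ C, -y i ≤ l := fun C hC => by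
    have := abs_le.1 (h C hC)
    rw [Finset.sum_neg_distrib]
    constructor <;> linarith
  obtain ⟨q₂, hq₂, hy₂⟩ : y⁺ ∈ (1 - l) • cliqueConstrainedPoly G :=
    mem_smul_cliqueConstrainedPoly (by linarith) (fun i => posPart_nonneg _)
      fun C hC => sum_posPart_le_of_isClique (fun C hC => (hyC C hC).1) hC
  obtain ⟨q₁, hq₁, hy₁⟩ : y⁻ ∈ l • cliqueConstrainedPoly G :=
    mem_smul_cliqueConstrainedPoly hl.1 (fun i => negPart_nonneg _)
      fun C hC => by
        simpa [posPart_neg] using sum_posPart_le_of_isClique (fun C hC => (hyC C hC).2) hC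
  have hyt : (y, 2 * l - 1) = l • (-q₁, (1 : ℝ)) + (1 - l) • (q₂, (-1 : ℝ)) := by
    refine Prod.ext ?_ (by simp; ring)
    simp only [Prod.fst_add, Prod.smul_fst, smul_neg] at hy₁ hy₂ ⊢
    rw [hy₁, hy₂, neg_add_eq_sub, posPart_sub_negPart]
  have h₁ : (-q₁, (1 : ℝ)) ∈
      convexHull ℝ (twoLevel (-cliqueConstrainedPoly G) (cliqueConstrainedPoly G)) :=
    subset_convexHull ℝ _ (Or.inl ⟨-q₁, by simpa using hq₁, rfl⟩)
  have h₂ : (q₂, (-1 : ℝ)) ∈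
      convexHull ℝ (twoLevel (-cliqueConstrainedPoly G) (cliqueConstrainedPoly G)) :=
    subset_convexHull ℝ _ (Or.inr ⟨q₂, hq₂, rfl⟩)
  rw [hyt]
  exact convex_convexHull ℝ _ h₁ h₂ hl.1 (by linarith) (by ring)

theorem convexHull_twoLevel_cliqueConstrainedPoly (G : SimpleGraph (Fin n)) :
    convexHull ℝ (twoLevel (-cliqueConstrainedPoly G) (cliqueConstrainedPoly G)) =
      cliqueSlab G :=
  (convexHull_twoLevel_subset_cliqueSlab G).antisymm (cliqueSlab_subset_convexHull_twoLevel G)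

lemma polarNR_convexHull (s : Set ((Fin n → ℝ) × ℝ)) : polarNR (convexHull ℝ s) = polarNR s := by
  refine Set.Subset.antisymm (fun y hy x hx => hy x (subset_convexHull ℝ s hx)) fun y hy => ?_
  let L : ((Fin n → ℝ) × ℝ) →ₗ[ℝ] ℝ :=
    (dotProductBilin ℝ ℝ y.1).comp (LinearMap.fst ℝ _ ℝ) + y.2 • LinearMap.snd ℝ _ ℝ
  exact convexHull_min (t := {x | L x ≤ 1}) hy (convex_halfSpace_le L.isLinear 1)

lemma mem_polarNR_hansenPoly_iff {G : SimpleGraph (Fin n)} {y : Fin n → ℝ} {t : ℝ} :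
    (y, t) ∈ polarNR (hansenPoly G) ↔ ∀ p ∈ stablePoly G, |2 * (y ⬝ᵥ p) + t| ≤ 1 := by
  rw [hansenPoly, polarNR_convexHull]
  constructor
  · intro h p hp
    have h₁ := h _ (Or.inl ⟨_, Set.smul_mem_smul_set hp, rfl⟩)
    have h₂ := h _ (Or.inr ⟨_, Set.smul_mem_smul_set hp, rfl⟩)
    simp only [← dotProduct.eq_1, dotProduct_smul, smul_eq_mul] at h₁ h₂
    rw [abs_le]; constructor <;> linarith
  · rintro h _ (⟨_, ⟨p, hp, rfl⟩, rfl⟩ | ⟨_, ⟨p, hp, rfl⟩, rfl⟩) <;>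
    · have := abs_le.1 (h p hp)
      simp only [← dotProduct.eq_1, dotProduct_smul, smul_eq_mul]
      linarith

lemma polarNR_hansenPoly (G : SimpleGraph (Fin n)) : polarNR (hansenPoly G) = cliqueSlab Gᶜ := by
  ext ⟨y, t⟩
  simp only [mem_polarNR_hansenPoly_iff, cliqueSlab, SimpleGraph.isClique_compl]
  constructor
  · intro h S hS
    simpa [dotProduct_indicator] using h _ (indicator_mem_stablePoly hS)
  · intro h p hp
    have hup : y ⬝ᵥ p ≤ (1 - t) / 2 := dotProduct_le_of_mem_stablePoly
      (fun S hS => by linarith [(abs_le.1 (h S hS)).2]) hp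
    have hlow : -y ⬝ᵥ p ≤ (1 + t) / 2 := dotProduct_le_of_mem_stablePoly
      (fun S hS => by
        simp only [Pi.neg_apply, Finset.sum_neg_distrib]
        linarith [(abs_le.1 (h S hS)).1]) hp
    rw [neg_dotProduct] at hlow
    rw [abs_le]; constructor <;> linarith

lemma image_twoLevel (c : ℝ) (A B : Set (Fin n → ℝ)) :
    (fun p : (Fin n → ℝ) × ℝ => (c • p.1, p.2)) '' twoLevel A B = twoLevel (c • A) (c • B) := by
  simp only [twoLevel, Set.image_union, Set.image_image, ← Set.image_smul]

lemma image_convexHull_twoLevel (c : ℝ) (A B : Set (Fin n → ℝ)) :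
    (fun p : (Fin n → ℝ) × ℝ => (c • p.1, p.2)) '' convexHull ℝ (twoLevel A B) =
      convexHull ℝ (twoLevel (c • A) (c • B)) := by
  rw [← image_twoLevel]
  exact ((c • LinearMap.id).prodMap LinearMap.id).image_convexHull _

end

/-- If `G` is perfect (its stable set polytope is cut out by nonnegativity and clique
inequalities), then `H(G)° = conv(((−P_{Ḡ}) × {1}) ∪ (P_{Ḡ} × {−1}))`, which is the
image of `H(Ḡ)` under the linear automorphism `(x,t) ↦ (−x/2, t)`; in particular
`H(G)°` is linearly isomorphic to `H(Ḡ)`. -/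
theorem hansen_polar_of_perfect {n : ℕ} (G : SimpleGraph (Fin n))
    (hperf : stablePoly G =
      {x | (∀ i, 0 ≤ x i) ∧
        ∀ C : Finset (Fin n), (∀ a ∈ C, ∀ b ∈ C, a ≠ b → G.Adj a b) →
          ∑ i ∈ C, x i ≤ 1}) :
    polarNR (hansenPoly G) =
      convexHull ℝ
        (((fun x => (x, (1 : ℝ))) '' (-(stablePoly Gᶜ))) ∪
         ((fun x => (x, (-1 : ℝ))) '' (stablePoly Gᶜ))) ∧
    polarNR (hansenPoly G) =
      (fun p : (Fin n → ℝ) × ℝ => (-(1 / 2 : ℝ) • p.1, p.2)) '' hansenPoly Gᶜ := by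
  have hpolar :
      polarNR (hansenPoly G) = convexHull ℝ (twoLevel (-stablePoly Gᶜ) (stablePoly Gᶜ)) := by
    rw [polarNR_hansenPoly, stablePoly_compl_eq_of_perfect hperf,
      convexHull_twoLevel_cliqueConstrainedPoly]
  refine ⟨hpolar, ?_⟩
  rw [hpolar, hansenPoly, ← twoLevel, image_convexHull_twoLevel, smul_smul, smul_smul]
  norm_num [Set.neg_smul_set]
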